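/- Every element g ∈ G = A ∗_C B is conjugate in G to a cyclically reduced element g₀. The element g₀ is not uniquely determined by g, but its length is: any two cyclically reduced elements of G that are conjugate to g have reduced forms of the same length. -/

import Mathlib

open Monoid

universe u

/-- The two factors of the amalgam, indexed by `Bool`. -/
def Fac (A B : Type u) : Bool → Type u
  | true => A
  | false => B

instance FacGroup (A B : Type u) [Group A] [Group B] : (b : Bool) → Group (Fac A B b)
  | true => inferInstanceAs (Group A)
  | false => inferInstanceAs (Group B)

variable {A B C : Type u} [Group A] [Group B] [Group C]

/-- The family of monomorphisms `C → A`, `C → B`. -/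
def amalgHom (φ : C →* A) (ψ : C →* B) : (b : Bool) → C →* Fac A B b
  | true => φ
  | false => ψ

variable (φ : C →* A) (ψ : C →* B)

/-- The amalgamated free product `G = A ∗_C B`, i.e. the pushout of `φ` and `ψ`. -/
abbrev Amalg : Type u := Monoid.PushoutI (amalgHom φ ψ)

/-- The factor `A`, identified with its image in `G = A ∗_C B`. -/
def facA : Subgroup (Amalg φ ψ) := (Monoid.PushoutI.of (φ := amalgHom φ ψ) true).range

/-- The factor `B`, identified with its image in `G = A ∗_C B`. -/
def facB : Subgroup (Amalg φ ψ) := (Monoid.PushoutI.of (φ := amalgHom φ ψ) false).range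

/-- The amalgamated subgroup `C`, identified with its image in `G = A ∗_C B`. -/
def amalgC : Subgroup (Amalg φ ψ) := (Monoid.PushoutI.base (amalgHom φ ψ)).range

/-- `c * g₁ ⋯ gₙ` (with the list `L = [g₁, …, gₙ]`) is a reduced form:
`c ∈ C`, each `gᵢ ∈ (A ∪ B) ∖ C`, and consecutive letters lie in different factors. -/
def ReducedForm (c : Amalg φ ψ) (L : List (Amalg φ ψ)) : Prop :=
  c ∈ amalgC φ ψ ∧
  (∀ x ∈ L, (x ∈ facA φ ψ ∨ x ∈ facB φ ψ) ∧ x ∉ amalgC φ ψ) ∧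
  L.Chain' (fun x y => (x ∈ facA φ ψ → y ∈ facB φ ψ) ∧ (x ∈ facB φ ψ → y ∈ facA φ ψ))

/-- A reduced form `c * g₁ ⋯ gₙ` is cyclically reduced if `n = 0`, or `n = 1` and the
element is not conjugate to an element of `C`, or `n ≥ 2` and `g₁`, `gₙ` lie in different
factors. -/
def CyclicallyReducedForm (c : Amalg φ ψ) (L : List (Amalg φ ψ)) : Prop :=
  ReducedForm φ ψ c L ∧
  (L.length = 0 ∨
    (L.length = 1 ∧ ∀ x : Amalg φ ψ, x⁻¹ * (c * L.prod) * x ∉ amalgC φ ψ) ∨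
    (2 ≤ L.length ∧ ∀ x y : Amalg φ ψ, x ∈ L.head? → y ∈ L.getLast? →
      ((x ∈ facA φ ψ → y ∈ facB φ ψ) ∧ (x ∈ facB φ ψ → y ∈ facA φ ψ))))

/-- An element of `G = A ∗_C B` is cyclically reduced if it has a cyclically reduced
reduced form. -/
def CyclicallyReduced (g : Amalg φ ψ) : Prop :=
  ∃ (c : Amalg φ ψ) (L : List (Amalg φ ψ)), g = c * L.prod ∧ CyclicallyReducedForm φ ψ c L

/-!
Reduced forms of an element all have the same length `ℓ`: this is the normal form theorem for
amalgamated products (`Monoid.PushoutI.NormalWord`). Merging letters shows that `ℓ` is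
subadditive. If the end letters `a₁, aₙ` of a reduced form `c a₁ ⋯ aₙ` lie in one factor,
conjugating by `c a₁` fuses `aₙ c a₁` into a single letter and lowers `ℓ`; iterating yields a
cyclically reduced conjugate. If `g` is cyclically reduced with `ℓ g = n ≥ 2`, the reduced forms
of `g` concatenate, so `ℓ (g ^ k) = k n`; for a conjugate `h = x g x⁻¹`, subadditivity gives
`k n ≤ k ℓ h + ℓ x + ℓ x⁻¹` for every `k`, hence `n ≤ ℓ h`. So cyclically reduced elements have
the least length in their conjugacy class.
-/

namespace Amalg

variable {φ ψ}

theorem amalgHom_injective (hφ : Function.Injective φ) (hψ : Function.Injective ψ) :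
    ∀ b, Function.Injective (amalgHom φ ψ b)
  | true => hφ
  | false => hψ

variable (φ ψ) in
def factor (b : Bool) : Subgroup (Amalg φ ψ) := (PushoutI.of (φ := amalgHom φ ψ) b).range

@[simp] theorem factor_true : factor φ ψ true = facA φ ψ := rfl

@[simp] theorem factor_false : factor φ ψ false = facB φ ψ := rfl

theorem amalgC_le_factor (b : Bool) : amalgC φ ψ ≤ factor φ ψ b := by
  rintro _ ⟨h, rfl⟩
  exact ⟨amalgHom φ ψ b h, PushoutI.of_apply_eq_base _ b h⟩

theorem mem_amalgC_of_mem_factor_of_mem_factor_not (hinj : ∀ b, Function.Injective (amalgHom φ ψ b))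
    {x : Amalg φ ψ} {b : Bool} (hx : x ∈ factor φ ψ b) (hx' : x ∈ factor φ ψ !b) :
    x ∈ amalgC φ ψ := by
  rw [amalgC, ← PushoutI.inf_of_range_eq_base_range hinj (Bool.not_ne_self b).symm]
  exact ⟨hx, hx'⟩

variable (φ ψ) in
def IsLetter (x : Amalg φ ψ) : Prop := (x ∈ facA φ ψ ∨ x ∈ facB φ ψ) ∧ x ∉ amalgC φ ψ

variable (φ ψ) in
def Alternate (x y : Amalg φ ψ) : Prop :=
  (x ∈ facA φ ψ → y ∈ facB φ ψ) ∧ (x ∈ facB φ ψ → y ∈ facA φ ψ)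

variable (φ ψ) in
def IsReducedWord (L : List (Amalg φ ψ)) : Prop :=
  (∀ x ∈ L, IsLetter φ ψ x) ∧ L.IsChain (Alternate φ ψ)

theorem _root_.reducedForm_iff {c : Amalg φ ψ} {L : List (Amalg φ ψ)} :
    ReducedForm φ ψ c L ↔ c ∈ amalgC φ ψ ∧ IsReducedWord φ ψ L :=
  Iff.rfl

theorem isLetter_of_mem_factor {x : Amalg φ ψ} {b : Bool} (hx : x ∈ factor φ ψ b)
    (hxC : x ∉ amalgC φ ψ) : IsLetter φ ψ x := by
  cases b
  · exact ⟨Or.inr hx, hxC⟩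
  · exact ⟨Or.inl hx, hxC⟩

theorem IsLetter.exists_mem_factor {x : Amalg φ ψ} (hx : IsLetter φ ψ x) :
    ∃ b, x ∈ factor φ ψ b := by
  rcases hx.1 with h | h
  · exact ⟨true, h⟩
  · exact ⟨false, h⟩

theorem IsLetter.mem_factor_not {x : Amalg φ ψ} (hx : IsLetter φ ψ x) {b : Bool}
    (hb : x ∉ factor φ ψ b) : x ∈ factor φ ψ !b := by
  cases b <;> simp_all [IsLetter]

theorem alternate_iff (hinj : ∀ b, Function.Injective (amalgHom φ ψ b)) {x y : Amalg φ ψ}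
    {b : Bool} (hx : x ∈ factor φ ψ b) (hxC : x ∉ amalgC φ ψ) :
    Alternate φ ψ x y ↔ y ∈ factor φ ψ !b := by
  have hx' : x ∉ factor φ ψ !b := fun h =>
    hxC (mem_amalgC_of_mem_factor_of_mem_factor_not hinj hx h)
  cases b
  · exact ⟨fun h => h.2 hx, fun hy => ⟨fun h => absurd h hx', fun _ => hy⟩⟩
  · exact ⟨fun h => h.1 hx, fun hy => ⟨fun _ => hy, fun h => absurd h hx'⟩⟩

theorem isReducedWord_nil : IsReducedWord φ ψ [] := ⟨by simp, List.isChain_nil⟩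

theorem IsReducedWord.tail {x : Amalg φ ψ} {L : List (Amalg φ ψ)}
    (h : IsReducedWord φ ψ (x :: L)) : IsReducedWord φ ψ L :=
  ⟨fun y hy => h.1 y (List.mem_cons_of_mem x hy), h.2.tail⟩

theorem IsReducedWord.of_append_left {L M : List (Amalg φ ψ)}
    (h : IsReducedWord φ ψ (L ++ M)) : IsReducedWord φ ψ L :=
  ⟨fun y hy => h.1 y (List.mem_append_left M hy), h.2.left_of_append⟩

theorem IsReducedWord.head_mem_factor_not (hinj : ∀ b, Function.Injective (amalgHom φ ψ b))
    {x : Amalg φ ψ} {L : List (Amalg φ ψ)} (h : IsReducedWord φ ψ (x :: L)) {b : Bool}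
    (hx : x ∈ factor φ ψ b) : ∀ y ∈ L.head?, y ∈ factor φ ψ !b := fun y hy =>
  (alternate_iff hinj hx (h.1 x List.mem_cons_self).2).1 (List.isChain_cons.1 h.2 |>.1 y hy)

theorem IsReducedWord.cons (hinj : ∀ b, Function.Injective (amalgHom φ ψ b))
    {x : Amalg φ ψ} {L : List (Amalg φ ψ)} {b : Bool} (hx : x ∈ factor φ ψ b)
    (hxC : x ∉ amalgC φ ψ) (hL : IsReducedWord φ ψ L) (hhead : ∀ y ∈ L.head?, y ∈ factor φ ψ !b) :
    IsReducedWord φ ψ (x :: L) :=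
  ⟨List.forall_mem_cons.2 ⟨isLetter_of_mem_factor hx hxC, hL.1⟩,
    List.isChain_cons.2 ⟨fun y hy => (alternate_iff hinj hx hxC).2 (hhead y hy), hL.2⟩⟩

/-- The invariant on `fstIdx` is what lets `NormalWord.cons` extend the word at each step. -/
theorem IsReducedWord.exists_normalWord (hinj : ∀ b, Function.Injective (amalgHom φ ψ b))
    (d : PushoutI.NormalWord.Transversal (amalgHom φ ψ)) {L : List (Amalg φ ψ)}
    (hL : IsReducedWord φ ψ L) :
    ∃ w : PushoutI.NormalWord d, w.prod = L.prod ∧ w.toList.length = L.length ∧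
      ∀ b, w.fstIdx = some b → ∀ y ∈ L.head?, y ∈ factor φ ψ b := by
  induction L with
  | nil => exact ⟨.empty, by simp, rfl, by simp⟩
  | cons x L ih =>
    obtain ⟨w, hprod, hlen, hfst⟩ := ih hL.tail
    have hxC := (hL.1 x List.mem_cons_self).2
    obtain ⟨b, g, rfl⟩ := (hL.1 x List.mem_cons_self).exists_mem_factor
    have hgr : g ∉ (amalgHom φ ψ b).range := by
      rintro ⟨h, rfl⟩
      exact hxC ⟨h, (PushoutI.of_apply_eq_base _ b h).symm⟩
    have hmw : w.fstIdx ≠ some b := by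
      intro hb
      cases L with
      | nil => simp_all [CoprodI.Word.fstIdx]
      | cons y L =>
        have hy := hfst b hb y rfl
        have hy' := hL.head_mem_factor_not hinj ⟨g, rfl⟩ y rfl
        exact (hL.tail.1 y List.mem_cons_self).2
          (mem_amalgC_of_mem_factor_of_mem_factor_not hinj hy hy')
    refine ⟨.cons g w hmw hgr, by simp [hprod], by simp [hlen], ?_⟩
    simpa [CoprodI.Word.fstIdx] using ⟨g, rfl⟩

theorem _root_.ReducedForm.length_eq (hinj : ∀ b, Function.Injective (amalgHom φ ψ b))
    {c₁ c₂ : Amalg φ ψ} {L₁ L₂ : List (Amalg φ ψ)} (h₁ : ReducedForm φ ψ c₁ L₁)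
    (h₂ : ReducedForm φ ψ c₂ L₂) (he : c₁ * L₁.prod = c₂ * L₂.prod) :
    L₁.length = L₂.length := by
  obtain ⟨d⟩ := PushoutI.NormalWord.transversal_nonempty _ hinj
  obtain ⟨⟨e₁, rfl⟩, hL₁⟩ := reducedForm_iff.1 h₁
  obtain ⟨⟨e₂, rfl⟩, hL₂⟩ := reducedForm_iff.1 h₂
  obtain ⟨w₁, hprod₁, hlen₁, -⟩ := IsReducedWord.exists_normalWord hinj d hL₁
  obtain ⟨w₂, hprod₂, hlen₂, -⟩ := IsReducedWord.exists_normalWord hinj d hL₂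
  have hw : e₁ • w₁ = e₂ • w₂ := PushoutI.NormalWord.prod_injective <| by
    simp only [PushoutI.NormalWord.prod_base_smul, hprod₁, hprod₂, he]
  rw [← hlen₁, ← hlen₂]
  exact congrArg (fun w => w.toList.length) hw

variable (φ ψ) in
noncomputable def reducedLength (g : Amalg φ ψ) : ℕ :=
  sInf {n | ∃ c L, ReducedForm φ ψ c L ∧ g = c * L.prod ∧ L.length = n}

theorem _root_.ReducedForm.reducedLength_eq (hinj : ∀ b, Function.Injective (amalgHom φ ψ b))
    {c : Amalg φ ψ} {L : List (Amalg φ ψ)} (h : ReducedForm φ ψ c L) :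
    reducedLength φ ψ (c * L.prod) = L.length := by
  have hmem : L.length ∈
      {n | ∃ c' L', ReducedForm φ ψ c' L' ∧ c * L.prod = c' * L'.prod ∧ L'.length = n} :=
    ⟨c, L, h, rfl, rfl⟩
  obtain ⟨c', L', h', he, hlen⟩ := Nat.sInf_mem ⟨_, hmem⟩
  exact hlen.symm.trans (h.length_eq hinj h' he).symm

theorem IsReducedWord.reducedLength_prod (hinj : ∀ b, Function.Injective (amalgHom φ ψ b))
    {L : List (Amalg φ ψ)} (h : IsReducedWord φ ψ L) : reducedLength φ ψ L.prod = L.length := by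
  simpa using (reducedForm_iff.2 ⟨one_mem _, h⟩).reducedLength_eq hinj

theorem reducedForm_nil {c : Amalg φ ψ} (hc : c ∈ amalgC φ ψ) : ReducedForm φ ψ c [] :=
  ⟨hc, isReducedWord_nil⟩

theorem exists_reducedForm_mul_of_mem_factor (hinj : ∀ b, Function.Injective (amalgHom φ ψ b))
    {x c : Amalg φ ψ} {L : List (Amalg φ ψ)} {b : Bool} (hx : x ∈ factor φ ψ b)
    (h : ReducedForm φ ψ c L) :
    ∃ c' L', ReducedForm φ ψ c' L' ∧ x * (c * L.prod) = c' * L'.prod ∧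
      L'.length ≤ L.length + 1 := by
  obtain ⟨hc, hL⟩ := reducedForm_iff.1 h
  have hz : x * c ∈ factor φ ψ b := mul_mem hx (amalgC_le_factor b hc)
  by_cases hzC : x * c ∈ amalgC φ ψ
  · exact ⟨x * c, L, ⟨hzC, hL⟩, (mul_assoc _ _ _).symm, by omega⟩
  cases L with
  | nil => exact ⟨1, [x * c], ⟨one_mem _, hL.cons hinj hz hzC (by simp)⟩, by simp, by simp⟩
  | cons y L =>
    by_cases hy : y ∈ factor φ ψ b
    · have hzy : x * c * y ∈ factor φ ψ b := mul_mem hz hy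
      have hprod : x * (c * (y :: L).prod) = x * c * y * L.prod := by simp [mul_assoc]
      by_cases hzyC : x * c * y ∈ amalgC φ ψ
      · exact ⟨x * c * y, L, ⟨hzyC, hL.tail⟩, hprod, by simp; omega⟩
      · refine ⟨1, x * c * y :: L, ⟨one_mem _, ?_⟩, by rw [hprod]; simp [mul_assoc], by simp⟩
        exact hL.tail.cons hinj hzy hzyC (hL.head_mem_factor_not hinj hy)
    · refine ⟨1, x * c :: y :: L, ⟨one_mem _, ?_⟩, by simp [mul_assoc], by simp⟩
      refine hL.cons hinj hz hzC fun y' hy' => ?_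
      obtain rfl : y = y' := by simpa using hy'
      exact (hL.1 y List.mem_cons_self).mem_factor_not hy

theorem _root_.ReducedForm.exists_mul (hinj : ∀ b, Function.Injective (amalgHom φ ψ b))
    {c c' : Amalg φ ψ} {L L' : List (Amalg φ ψ)} (h : ReducedForm φ ψ c L)
    (h' : ReducedForm φ ψ c' L') :
    ∃ c'' L'', ReducedForm φ ψ c'' L'' ∧ c * L.prod * (c' * L'.prod) = c'' * L''.prod ∧
      L''.length ≤ L.length + L'.length := by
  induction L generalizing c with
  | nil => exact ⟨c * c', L', ⟨mul_mem h.1 h'.1, h'.2⟩, by simp [mul_assoc], by simp⟩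
  | cons x L ih =>
    obtain ⟨hc, hL⟩ := reducedForm_iff.1 h
    obtain ⟨e, M, hM, he, hlen⟩ := ih ⟨one_mem _, hL.tail⟩
    obtain ⟨b, hx⟩ := (hL.1 x List.mem_cons_self).exists_mem_factor
    obtain ⟨e', M', hM', he', hlen'⟩ := exists_reducedForm_mul_of_mem_factor hinj hx hM
    refine ⟨c * e', M', ⟨mul_mem hc hM'.1, hM'.2⟩, ?_, by simp; omega⟩
    calc c * (x :: L).prod * (c' * L'.prod)
        = c * (x * (1 * L.prod * (c' * L'.prod))) := by simp [mul_assoc]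
      _ = c * e' * M'.prod := by rw [he, he', mul_assoc]

theorem exists_reducedForm (hinj : ∀ b, Function.Injective (amalgHom φ ψ b)) (g : Amalg φ ψ) :
    ∃ c L, ReducedForm φ ψ c L ∧ g = c * L.prod := by
  induction g using PushoutI.induction_on with
  | of b x =>
    obtain ⟨c, L, h, he, -⟩ := exists_reducedForm_mul_of_mem_factor hinj (x := PushoutI.of b x)
      ⟨x, rfl⟩ (reducedForm_nil (one_mem _))
    exact ⟨c, L, h, by simpa using he⟩
  | base h => exact ⟨_, [], reducedForm_nil ⟨h, rfl⟩, by simp⟩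
  | mul x y hx hy =>
    obtain ⟨c, L, h, rfl⟩ := hx
    obtain ⟨c', L', h', rfl⟩ := hy
    obtain ⟨c'', L'', h'', he, -⟩ := h.exists_mul hinj h'
    exact ⟨c'', L'', h'', he⟩

theorem reducedLength_mul_le (hinj : ∀ b, Function.Injective (amalgHom φ ψ b)) (x y : Amalg φ ψ) :
    reducedLength φ ψ (x * y) ≤ reducedLength φ ψ x + reducedLength φ ψ y := by
  obtain ⟨c, L, h, rfl⟩ := exists_reducedForm hinj x
  obtain ⟨c', L', h', rfl⟩ := exists_reducedForm hinj y
  obtain ⟨c'', L'', h'', he, hlen⟩ := h.exists_mul hinj h'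
  rw [he, h''.reducedLength_eq hinj, h.reducedLength_eq hinj, h'.reducedLength_eq hinj]
  exact hlen

theorem reducedLength_pow_le (hinj : ∀ b, Function.Injective (amalgHom φ ψ b)) (g : Amalg φ ψ)
    (k : ℕ) : reducedLength φ ψ (g ^ k) ≤ k * reducedLength φ ψ g := by
  induction k with
  | zero => simpa using (isReducedWord_nil.reducedLength_prod hinj).le
  | succ k ih =>
    calc reducedLength φ ψ (g ^ (k + 1))
        ≤ reducedLength φ ψ (g ^ k) + reducedLength φ ψ g := by
          rw [pow_succ]; exact reducedLength_mul_le hinj _ _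
      _ ≤ (k + 1) * reducedLength φ ψ g := by rw [add_mul, one_mul]; omega

theorem mem_amalgC_of_reducedLength_eq_zero (hinj : ∀ b, Function.Injective (amalgHom φ ψ b))
    {g : Amalg φ ψ} (hg : reducedLength φ ψ g = 0) : g ∈ amalgC φ ψ := by
  obtain ⟨c, L, h, rfl⟩ := exists_reducedForm hinj g
  rw [h.reducedLength_eq hinj, List.length_eq_zero_iff] at hg
  subst hg
  simpa using h.1

theorem reducedLength_le_one_of_mem_factor (hinj : ∀ b, Function.Injective (amalgHom φ ψ b))
    {x : Amalg φ ψ} {b : Bool} (hx : x ∈ factor φ ψ b) : reducedLength φ ψ x ≤ 1 := by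
  obtain ⟨c, L, h, he, hlen⟩ := exists_reducedForm_mul_of_mem_factor hinj hx
    (reducedForm_nil (one_mem _))
  rw [show x = c * L.prod by simpa using he, h.reducedLength_eq hinj]
  exact hlen

theorem IsReducedWord.flatten_replicate {L : List (Amalg φ ψ)} (hL : IsReducedWord φ ψ L)
    (hcyc : ∀ x ∈ L.getLast?, ∀ y ∈ L.head?, Alternate φ ψ x y) (k : ℕ) :
    IsReducedWord φ ψ (List.replicate k L).flatten := by
  rcases eq_or_ne L [] with rfl | hne
  · simpa using isReducedWord_nil
  refine ⟨fun x hx => ?_, ?_⟩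
  · obtain ⟨l, hl, hxl⟩ := List.mem_flatten.1 hx
    rw [List.eq_of_mem_replicate hl] at hxl
    exact hL.1 x hxl
  · rw [List.isChain_flatten (by simp [List.mem_replicate, hne.symm])]
    exact ⟨fun l hl => List.eq_of_mem_replicate hl ▸ hL.2, List.isChain_replicate_of_rel k hcyc⟩

theorem _root_.CyclicallyReducedForm.reducedLength_pow
    (hinj : ∀ b, Function.Injective (amalgHom φ ψ b)) {c : Amalg φ ψ} {L : List (Amalg φ ψ)}
    (h : CyclicallyReducedForm φ ψ c L) (hL : 2 ≤ L.length) (k : ℕ) :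
    reducedLength φ ψ ((c * L.prod) ^ k) = k * L.length := by
  obtain ⟨hc, hred⟩ := reducedForm_iff.1 h.1
  have hcyc : ∀ x y, x ∈ L.head? → y ∈ L.getLast? → Alternate φ ψ x y := by
    rcases h.2 with h0 | ⟨h1, -⟩ | ⟨-, hcyc⟩
    · omega
    · omega
    · exact hcyc
  rcases L with _ | ⟨a, _ | ⟨a₂, L⟩⟩
  · simp at hL
  · simp at hL
  obtain ⟨b, ha⟩ := (hred.1 a List.mem_cons_self).exists_mem_factor
  have haC := (hred.1 a List.mem_cons_self).2
  have hca : c * a ∈ factor φ ψ b := mul_mem (amalgC_le_factor b hc) ha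
  have hcaC : c * a ∉ amalgC φ ψ := fun h => haC (by simpa using mul_mem (inv_mem hc) h)
  -- absorbing `c` into the first letter makes the word cyclically alternating
  have hred' : IsReducedWord φ ψ (c * a :: a₂ :: L) :=
    hred.tail.cons hinj hca hcaC (hred.head_mem_factor_not hinj ha)
  have hcyc' : ∀ z ∈ (c * a :: a₂ :: L).getLast?, ∀ y ∈ (c * a :: a₂ :: L).head?,
      Alternate φ ψ z y := by
    intro z hz y hy
    obtain rfl : c * a = y := by simpa using hy
    rw [List.getLast?_cons_cons] at hz
    have hz' : z ∈ (a :: a₂ :: L).getLast? := by rwa [List.getLast?_cons_cons]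
    have hzb : z ∈ factor φ ψ !b := (alternate_iff hinj ha haC).1 (hcyc a z rfl hz')
    have hzC := (hred.1 z (List.mem_of_getLast? hz')).2
    exact (alternate_iff hinj hzb hzC).2 (by simpa using hca)
  have hprod : (c * (a :: a₂ :: L).prod) ^ k =
      (List.replicate k (c * a :: a₂ :: L)).flatten.prod := by
    simp [List.prod_flatten, mul_assoc]
  rw [hprod, (hred'.flatten_replicate hcyc' k).reducedLength_prod hinj]
  simp

theorem _root_.CyclicallyReduced.reducedLength_le_of_isConj
    (hinj : ∀ b, Function.Injective (amalgHom φ ψ b)) {g h : Amalg φ ψ}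
    (hg : CyclicallyReduced φ ψ g) (hgh : IsConj g h) :
    reducedLength φ ψ g ≤ reducedLength φ ψ h := by
  obtain ⟨x, rfl⟩ := isConj_iff.1 hgh
  obtain ⟨c, L, rfl, hcr⟩ := hg
  rw [hcr.1.reducedLength_eq hinj]
  rcases hcr.2 with h0 | ⟨h1, hnot⟩ | ⟨h2, -⟩
  · omega
  · by_contra hlt
    refine hnot x⁻¹ ?_
    rw [inv_inv]
    exact mem_amalgC_of_reducedLength_eq_zero hinj (by omega)
  · set K := reducedLength φ ψ x⁻¹ + reducedLength φ ψ x
    have key : ∀ k, k * L.length ≤ k * reducedLength φ ψ (x * (c * L.prod) * x⁻¹) + K := by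
      intro k
      calc k * L.length = reducedLength φ ψ ((c * L.prod) ^ k) :=
            (hcr.reducedLength_pow hinj h2 k).symm
        _ = reducedLength φ ψ (x⁻¹ * (x * (c * L.prod) * x⁻¹) ^ k * x) := by
            rw [conj_pow]; group
        _ ≤ reducedLength φ ψ x⁻¹ + reducedLength φ ψ ((x * (c * L.prod) * x⁻¹) ^ k) +
              reducedLength φ ψ x :=
            (reducedLength_mul_le hinj _ _).trans
              (Nat.add_le_add_right (reducedLength_mul_le hinj _ _) _)
        _ ≤ k * reducedLength φ ψ (x * (c * L.prod) * x⁻¹) + K := by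
            have := reducedLength_pow_le hinj (x * (c * L.prod) * x⁻¹) k
            omega
    by_contra hlt
    have := key (K + 1)
    nlinarith

theorem _root_.ReducedForm.exists_reducedLength_conj_lt
    (hinj : ∀ b, Function.Injective (amalgHom φ ψ b)) {c : Amalg φ ψ} {L : List (Amalg φ ψ)}
    (h : ReducedForm φ ψ c L) (hL : 2 ≤ L.length)
    (hcyc : ¬ ∀ x y, x ∈ L.head? → y ∈ L.getLast? → Alternate φ ψ x y) :
    ∃ x, reducedLength φ ψ (x⁻¹ * (c * L.prod) * x) < L.length := by
  obtain ⟨hc, hred⟩ := reducedForm_iff.1 h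
  rcases L with _ | ⟨a, L⟩
  · simp at hL
  rcases L.eq_nil_or_concat with rfl | ⟨M, z, rfl⟩
  · simp at hL
  simp only [List.concat_eq_append] at hcyc hred ⊢
  have hlast : (a :: (M ++ [z])).getLast? = some z := by
    rw [← List.cons_append, List.getLast?_concat]
  have haz : ¬ Alternate φ ψ a z := by simpa [hlast] using hcyc
  obtain ⟨b, ha⟩ := (hred.1 a List.mem_cons_self).exists_mem_factor
  have hzb : z ∈ factor φ ψ b := by
    simpa using (hred.1 z (by simp)).mem_factor_not
      (mt (alternate_iff hinj ha (hred.1 a List.mem_cons_self).2).2 haz)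
  refine ⟨c * a, ?_⟩
  have hconj : (c * a)⁻¹ * (c * (a :: (M ++ [z])).prod) * (c * a) = M.prod * (z * (c * a)) := by
    simp only [List.prod_cons, List.prod_append, List.prod_nil]
    group
  rw [hconj]
  calc reducedLength φ ψ (M.prod * (z * (c * a)))
      ≤ reducedLength φ ψ M.prod + reducedLength φ ψ (z * (c * a)) := reducedLength_mul_le hinj _ _
    _ ≤ M.length + 1 := Nat.add_le_add (hred.tail.of_append_left.reducedLength_prod hinj).le
          (reducedLength_le_one_of_mem_factor hinj
            (mul_mem hzb (mul_mem (amalgC_le_factor b hc) ha)))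
    _ < (a :: (M ++ [z])).length := by simp

theorem cyclicallyReduced_of_mem_amalgC {g : Amalg φ ψ} (hg : g ∈ amalgC φ ψ) :
    CyclicallyReduced φ ψ g :=
  ⟨g, [], by simp, reducedForm_nil hg, Or.inl rfl⟩

theorem exists_cyclicallyReduced_conj (hinj : ∀ b, Function.Injective (amalgHom φ ψ b))
    (g : Amalg φ ψ) : ∃ x, CyclicallyReduced φ ψ (x⁻¹ * g * x) := by
  induction hn : reducedLength φ ψ g using Nat.strong_induction_on generalizing g with
  | _ n ih =>
  obtain ⟨c, L, h, rfl⟩ := exists_reducedForm hinj g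
  rw [h.reducedLength_eq hinj] at hn
  subst hn
  have hself : CyclicallyReducedForm φ ψ c L →
      ∃ x, CyclicallyReduced φ ψ (x⁻¹ * (c * L.prod) * x) :=
    fun hcr => ⟨1, c, L, by group, hcr⟩
  rcases L with _ | ⟨a, _ | ⟨a₂, L⟩⟩
  · exact hself ⟨h, Or.inl rfl⟩
  · by_cases hC : ∃ x, x⁻¹ * (c * [a].prod) * x ∈ amalgC φ ψ
    · obtain ⟨x, hx⟩ := hC
      exact ⟨x, cyclicallyReduced_of_mem_amalgC hx⟩
    · exact hself ⟨h, Or.inr (Or.inl ⟨rfl, fun x hx => hC ⟨x, hx⟩⟩)⟩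
  · by_cases hcyc : ∀ x y, x ∈ (a :: a₂ :: L).head? → y ∈ (a :: a₂ :: L).getLast? →
        Alternate φ ψ x y
    · exact hself ⟨h, Or.inr (Or.inr ⟨by simp, hcyc⟩)⟩
    · obtain ⟨x, hx⟩ := h.exists_reducedLength_conj_lt hinj (by simp) hcyc
      obtain ⟨y, hy⟩ := ih _ hx _ rfl
      refine ⟨x * y, ?_⟩
      rwa [show (x * y)⁻¹ * (c * (a :: a₂ :: L).prod) * (x * y) =
        y⁻¹ * (x⁻¹ * (c * (a :: a₂ :: L).prod) * x) * y by group]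

end Amalg

/-- Every element of `G = A ∗_C B` is conjugate to a cyclically reduced element; moreover all
cyclically reduced elements conjugate to a given `g` have reduced forms of the same length. -/
theorem exists_cyclicallyReduced_conjugate
    (hφ : Function.Injective φ) (hψ : Function.Injective ψ) (g : Amalg φ ψ) :
    (∃ g₀ x : Amalg φ ψ, x⁻¹ * g * x = g₀ ∧ CyclicallyReduced φ ψ g₀) ∧
    (∀ (g₁ g₂ x₁ x₂ c₁ c₂ : Amalg φ ψ) (L₁ L₂ : List (Amalg φ ψ)),
      x₁⁻¹ * g * x₁ = g₁ → x₂⁻¹ * g * x₂ = g₂ →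
      CyclicallyReduced φ ψ g₁ → CyclicallyReduced φ ψ g₂ →
      ReducedForm φ ψ c₁ L₁ → g₁ = c₁ * L₁.prod →
      ReducedForm φ ψ c₂ L₂ → g₂ = c₂ * L₂.prod →
      L₁.length = L₂.length) := by
  have hinj := Amalg.amalgHom_injective hφ hψ
  refine ⟨?_, ?_⟩
  · obtain ⟨x, hx⟩ := Amalg.exists_cyclicallyReduced_conj hinj g
    exact ⟨_, x, rfl, hx⟩
  · intro g₁ g₂ x₁ x₂ c₁ c₂ L₁ L₂ hg₁ hg₂ hcr₁ hcr₂ hL₁ hL₁' hL₂ hL₂'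
    have hconj : IsConj g₁ g₂ := isConj_iff.2 ⟨x₂⁻¹ * x₁, by rw [← hg₁, ← hg₂]; group⟩
    rw [← hL₁.reducedLength_eq hinj, ← hL₂.reducedLength_eq hinj, ← hL₁', ← hL₂']
    exact le_antisymm (hcr₁.reducedLength_le_of_isConj hinj hconj)
      (hcr₂.reducedLength_le_of_isConj hinj hconj.symm)
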